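/- Linear value function: fix estimated prices pε : Fin N → ℝ with 0 ≤ pε i ≤ pmax for all i, and let v i (s) = pε i * s. Then for every probability measure Q on Ω, α(Q) = ∑ i, max( pε i * b i - p* i * b i, 0 ), where p* i = ∫ p i dQ(p). -/

import Mathlib

open MeasureTheory

noncomputable section

/-- The set of possible price scenarios. -/
abbrev Omega (N : ℕ) (pmax : ℝ) : Type :=
  {p : Fin N → ℝ // ∀ i, 0 ≤ p i ∧ p i ≤ pmax}

/-- A position `S = (w, s)`: collected revenue `w ≥ 0` and remaining budgets `0 ≤ s i ≤ b i`. -/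
def IsPosition (N : ℕ) (b : Fin N → ℝ) (S : ℝ × (Fin N → ℝ)) : Prop :=
  0 ≤ S.1 ∧ ∀ i, 0 ≤ S.2 i ∧ S.2 i ≤ b i

/-- Return function of a position: `X_S(p) = w + ∑ i, p i * s i`. -/
def ret (N : ℕ) (pmax : ℝ) (S : ℝ × (Fin N → ℝ)) (p : Omega N pmax) : ℝ :=
  S.1 + ∑ i, p.1 i * S.2 i

/-- Generating function `θ(S) = -w - ∑ i, v i (s i)`. -/
def theta (N : ℕ) (v : Fin N → ℝ → ℝ) (S : ℝ × (Fin N → ℝ)) : ℝ :=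
  -S.1 - ∑ i, v i (S.2 i)

/-- Risk measure `ρ(X) = inf { θ(S) : S a position with X_S ≤ X pointwise }`, valued
in `ℝ ∪ {+∞}` (the infimum of the empty set is `+∞`). -/
def rho (N : ℕ) (b : Fin N → ℝ) (pmax : ℝ) (v : Fin N → ℝ → ℝ)
    (X : Omega N pmax → ℝ) : EReal :=
  sInf {t : EReal | ∃ S : ℝ × (Fin N → ℝ), IsPosition N b S ∧
    (∀ p, ret N pmax S p ≤ X p) ∧ t = ((theta N v S : ℝ) : EReal)}

/-- A bounded function on `Ω`. -/
def Bounded (N : ℕ) (pmax : ℝ) (X : Omega N pmax → ℝ) : Prop :=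
  ∃ C, ∀ p, |X p| ≤ C

/-- Penalty function `α(Q) = sup over bounded measurable X of (∫ (-X) dQ - ρ(X))`. -/
def alphaPen (N : ℕ) (b : Fin N → ℝ) (pmax : ℝ) (v : Fin N → ℝ → ℝ)
    (Q : Measure (Omega N pmax)) : EReal :=
  ⨆ X ∈ {X : Omega N pmax → ℝ | Measurable X ∧ Bounded N pmax X},
    (((∫ p, -X p ∂Q : ℝ) : EReal) - rho N b pmax v X)

/-!
Integrating the pointwise constraint `X_S ≤ X` against `Q` bounds `α(Q)` by the supremum over
positions `S` of `E_Q[-X_S] - θ(S)`, and choosing `X = X_S` gives the reverse inequality. For the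
linear value function the wealth `w` cancels and `E_Q[-X_S] - θ(S) = ∑ i, (pε i - p* i) * s i`, which
is maximised coordinatewise by `s i = b i` where `p* i ≤ pε i` and `s i = 0` elsewhere.
-/

lemma mul_le_max_mul_zero {c s b : ℝ} (hs₀ : 0 ≤ s) (hsb : s ≤ b) : c * s ≤ max (c * b) 0 := by
  rcases le_total 0 c with hc | hc
  · exact le_max_of_le_left (mul_le_mul_of_nonneg_left hsb hc)
  · exact le_max_of_le_right (mul_nonpos_of_nonpos_of_nonneg hc hs₀)

lemma mul_ite_nonneg_eq_max {c b : ℝ} (hb : 0 ≤ b) :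
    c * (if 0 ≤ c then b else 0) = max (c * b) 0 := by
  split_ifs with hc
  · exact (max_eq_left (mul_nonneg hc hb)).symm
  · rw [mul_zero, max_eq_right (mul_nonpos_of_nonpos_of_nonneg (not_le.mp hc).le hb)]

section Positions

variable {N : ℕ} {pmax : ℝ} {Q : Measure (Omega N pmax)}

lemma Bounded.integrable [IsFiniteMeasure Q] {X : Omega N pmax → ℝ} (hX : Bounded N pmax X)
    (hXm : Measurable X) : Integrable X Q :=
  let ⟨C, hC⟩ := hX
  .of_bound hXm.aestronglyMeasurable C (ae_of_all _ hC)

lemma measurable_coord (i : Fin N) : Measurable fun p : Omega N pmax => p.1 i :=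
  (measurable_pi_apply i).comp measurable_subtype_coe

lemma bounded_coord (i : Fin N) : Bounded N pmax fun p => p.1 i :=
  ⟨pmax, fun p => abs_le.mpr ⟨by linarith [(p.2 i).1, (p.2 i).2], (p.2 i).2⟩⟩

lemma measurable_ret (S : ℝ × (Fin N → ℝ)) : Measurable (ret N pmax S) :=
  measurable_const.add (Finset.measurable_sum _ fun i _ => (measurable_coord i).mul_const _)

lemma bounded_ret (S : ℝ × (Fin N → ℝ)) : Bounded N pmax (ret N pmax S) := by
  refine ⟨|S.1| + ∑ i, pmax * |S.2 i|, fun p => ?_⟩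
  have hcoord : ∀ i, |p.1 i * S.2 i| ≤ pmax * |S.2 i| := fun i => by
    rw [abs_mul, abs_of_nonneg (p.2 i).1]
    exact mul_le_mul_of_nonneg_right (p.2 i).2 (abs_nonneg _)
  calc |ret N pmax S p| ≤ |S.1| + ∑ i, |p.1 i * S.2 i| :=
        (abs_add_le _ _).trans (by gcongr; exact Finset.abs_sum_le_sum_abs _ _)
    _ ≤ |S.1| + ∑ i, pmax * |S.2 i| := by gcongr with i; exact hcoord i

lemma integral_ret [IsProbabilityMeasure Q] (S : ℝ × (Fin N → ℝ)) :
    ∫ p, ret N pmax S p ∂Q = S.1 + ∑ i, (∫ p, p.1 i ∂Q) * S.2 i := by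
  have hint : ∀ i, Integrable (fun p : Omega N pmax => p.1 i * S.2 i) Q := fun i =>
    ((bounded_coord i).integrable (measurable_coord i)).mul_const _
  unfold ret
  rw [integral_add (integrable_const _) (integrable_finsetSum _ fun i _ => hint i),
    integral_const, probReal_univ, one_smul, integral_finsetSum _ fun i _ => hint i]
  simp only [integral_mul_const]

variable {b : Fin N → ℝ} {v : Fin N → ℝ → ℝ}

lemma alphaPen_le_of_forall_isPosition [IsFiniteMeasure Q] {c : ℝ}
    (h : ∀ S, IsPosition N b S → -∫ p, ret N pmax S p ∂Q - theta N v S ≤ c) :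
    alphaPen N b pmax v Q ≤ c := by
  refine iSup₂_le fun X ⟨hXm, hXb⟩ => ?_
  have hrho : (((∫ p, -X p ∂Q) - c : ℝ) : EReal) ≤ rho N b pmax v X := by
    refine le_sInf ?_
    rintro _ ⟨S, hS, hSX, rfl⟩
    have hmono : ∫ p, -X p ∂Q ≤ ∫ p, -ret N pmax S p ∂Q :=
      integral_mono (hXb.integrable hXm).neg ((bounded_ret S).integrable (measurable_ret S)).neg
        fun p => neg_le_neg (hSX p)
    rw [integral_neg, integral_neg] at hmono
    rw [integral_neg]
    exact EReal.coe_le_coe_iff.mpr (by linarith [h S hS])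
  calc ((∫ p, -X p ∂Q : ℝ) : EReal) - rho N b pmax v X
      ≤ ((∫ p, -X p ∂Q : ℝ) : EReal) - (((∫ p, -X p ∂Q) - c : ℝ) : EReal) :=
        EReal.sub_le_sub le_rfl hrho
    _ = c := by rw [← EReal.coe_sub, sub_sub_cancel]

lemma le_alphaPen_of_isPosition {S : ℝ × (Fin N → ℝ)} (hS : IsPosition N b S) :
    ((-∫ p, ret N pmax S p ∂Q - theta N v S : ℝ) : EReal) ≤ alphaPen N b pmax v Q := by
  have hrho : rho N b pmax v (ret N pmax S) ≤ theta N v S :=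
    sInf_le ⟨S, hS, fun _ => le_rfl, rfl⟩
  calc ((-∫ p, ret N pmax S p ∂Q - theta N v S : ℝ) : EReal)
      = ((∫ p, -ret N pmax S p ∂Q : ℝ) : EReal) - theta N v S := by
        rw [integral_neg, EReal.coe_sub]
    _ ≤ ((∫ p, -ret N pmax S p ∂Q : ℝ) : EReal) - rho N b pmax v (ret N pmax S) :=
        EReal.sub_le_sub le_rfl hrho
    _ ≤ alphaPen N b pmax v Q :=
        le_biSup (fun X => ((∫ p, -X p ∂Q : ℝ) : EReal) - rho N b pmax v X)
          (show ret N pmax S ∈ {X | Measurable X ∧ Bounded N pmax X} from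
            ⟨measurable_ret S, bounded_ret S⟩)

lemma neg_integral_ret_sub_theta_of_linear [IsProbabilityMeasure Q] {pe : Fin N → ℝ}
    (hv : ∀ i s, v i s = pe i * s) (S : ℝ × (Fin N → ℝ)) :
    -∫ p, ret N pmax S p ∂Q - theta N v S = ∑ i, (pe i - ∫ p, p.1 i ∂Q) * S.2 i := by
  simp only [integral_ret, theta, hv, sub_mul, Finset.sum_sub_distrib]
  ring

end Positions

theorem stmt10_general (N : ℕ) (b : Fin N → ℝ) (hb : ∀ i, 0 < b i)
    (pmax : ℝ)
    (pe : Fin N → ℝ)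
    (v : Fin N → ℝ → ℝ) (hv : ∀ i s, v i s = pe i * s)
    (Q : Measure (Omega N pmax)) (hQ : IsProbabilityMeasure Q) :
    alphaPen N b pmax v Q =
      ((∑ i, max (pe i * b i - (∫ p : Omega N pmax, p.1 i ∂Q) * b i) 0 : ℝ) : EReal) := by
  simp only [← sub_mul]
  apply le_antisymm
  · refine alphaPen_le_of_forall_isPosition fun S hS => ?_
    rw [neg_integral_ret_sub_theta_of_linear hv]
    exact Finset.sum_le_sum fun i _ => mul_le_max_mul_zero (hS.2 i).1 (hS.2 i).2
  · let S : ℝ × (Fin N → ℝ) :=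
      (0, fun i => if 0 ≤ pe i - ∫ p, p.1 i ∂Q then b i else 0)
    have hS : IsPosition N b S :=
      ⟨le_rfl, fun i => by dsimp only [S]; split_ifs <;> simp [(hb i).le]⟩
    convert le_alphaPen_of_isPosition (Q := Q) (v := v) hS using 2
    rw [neg_integral_ret_sub_theta_of_linear hv]
    exact Finset.sum_congr rfl fun i _ => (mul_ite_nonneg_eq_max (hb i).le).symm

/-- for the linear value function `v i (s) = pε i * s`, the penalty is
`α(Q) = ∑ i, max (pε i * b i - p* i * b i) 0`, where `p* i = ∫ p i dQ(p)`. -/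
theorem stmt10 (N : ℕ) (hN : 1 ≤ N) (b : Fin N → ℝ) (hb : ∀ i, 0 < b i)
    (pmax : ℝ) (hpmax : 0 < pmax)
    (pe : Fin N → ℝ) (hpe : ∀ i, 0 ≤ pe i ∧ pe i ≤ pmax)
    (v : Fin N → ℝ → ℝ) (hv : ∀ i s, v i s = pe i * s)
    (Q : Measure (Omega N pmax)) (hQ : IsProbabilityMeasure Q) :
    alphaPen N b pmax v Q =
      ((∑ i, max (pe i * b i - (∫ p : Omega N pmax, p.1 i ∂Q) * b i) 0 : ℝ) : EReal) :=
  stmt10_general N b hb pmax pe v hv Q hQ
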